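/- arXiv:1509.01853 — 3 statements merged into one kernel-verified Lean document; each statement's English description precedes it below -/
import Mathlib

section
/- The group with presentation ⟨a₁, b₁, a₂, b₂ ∣ b₁b₂ = 1, [a₁,b₁] = 1, [a₂,b₂] = 1, b₂a₂b₂⁻¹a₁ = 1⟩ is isomorphic to ℤ × ℤ. -/
/-!
The relations give `b₁ = b₂⁻¹`, `[a₂, b₂] = 1` and `a₁ = (b₂ a₂ b₂⁻¹)⁻¹ = a₂⁻¹`, so the group is
generated by the two commuting elements `a₂`, `b₂` and is a quotient of `ℤ²` via
`(m, n) ↦ a₂ ^ m * b₂ ^ n`. Sending `a₂ ↦ (1, 0)`, `b₂ ↦ (0, 1)` respects the relations and splits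
this quotient map, so it is an isomorphism.
-/

namespace Stmt0

def a₁ : FreeGroup (Fin 4) := FreeGroup.of 0
def b₁ : FreeGroup (Fin 4) := FreeGroup.of 1
def a₂ : FreeGroup (Fin 4) := FreeGroup.of 2
def b₂ : FreeGroup (Fin 4) := FreeGroup.of 3

def rels : Set (FreeGroup (Fin 4)) :=
  { b₁ * b₂,
    a₁ * b₁ * a₁⁻¹ * b₁⁻¹,
    a₂ * b₂ * a₂⁻¹ * b₂⁻¹,
    b₂ * a₂ * b₂⁻¹ * a₁ }

open Multiplicative

lemma ofAdd_int_prod_eq (p : ℤ × ℤ) :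
    ofAdd p = ofAdd ((1 : ℤ), (0 : ℤ)) ^ p.1 * ofAdd ((0 : ℤ), (1 : ℤ)) ^ p.2 := by
  rw [← ofAdd_zsmul, ← ofAdd_zsmul, ← ofAdd_add]
  simp

section

variable {G : Type*} [Group G]

lemma _root_.MonoidHom.ext_mint_prod {f g : Multiplicative (ℤ × ℤ) →* G}
    (h₁ : f (ofAdd (1, 0)) = g (ofAdd (1, 0))) (h₂ : f (ofAdd (0, 1)) = g (ofAdd (0, 1))) :
    f = g := by
  refine MonoidHom.ext fun z => ?_
  rw [← ofAdd_toAdd z, ofAdd_int_prod_eq]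
  simp only [map_mul, map_zpow, h₁, h₂]

def zpowersPairHom {x y : G} (h : Commute x y) : Multiplicative (ℤ × ℤ) →* G :=
  ((zpowersHom G x).noncommCoprod (zpowersHom G y) fun _ _ => h.zpow_zpow _ _).comp
    (MulEquiv.prodMultiplicative (G := ℤ) (H := ℤ)).toMonoidHom

@[simp]
lemma zpowersPairHom_ofAdd {x y : G} (h : Commute x y) (m n : ℤ) :
    zpowersPairHom h (ofAdd (m, n)) = x ^ m * y ^ n :=
  rfl

end

local notation "ι" => PresentedGroup.of (rels := rels)

lemma commute_of_two_of_three : Commute (ι 2) (ι 3) :=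
  commutatorElement_eq_one_iff_commute.mp <|
    PresentedGroup.one_of_mem (x := a₂ * b₂ * a₂⁻¹ * b₂⁻¹) (by simp [rels])

lemma of_zero_eq : ι 0 = (ι 2)⁻¹ := by
  have h : ι 3 * ι 2 * (ι 3)⁻¹ * ι 0 = 1 :=
    PresentedGroup.one_of_mem (x := b₂ * a₂ * b₂⁻¹ * a₁) (by simp [rels])
  rw [commute_of_two_of_three.symm.eq, mul_inv_cancel_right] at h
  exact eq_inv_of_mul_eq_one_right h

lemma of_one_eq : ι 1 = (ι 3)⁻¹ :=
  eq_inv_of_mul_eq_one_left <| PresentedGroup.one_of_mem (x := b₁ * b₂) (by simp [rels])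

def toIntProd : PresentedGroup rels →* Multiplicative (ℤ × ℤ) :=
  PresentedGroup.toGroup (f := ![ofAdd (-1, 0), ofAdd (0, -1), ofAdd (1, 0), ofAdd (0, 1)]) <| by
    rintro r (rfl | rfl | rfl | rfl) <;> simp [a₁, b₁, a₂, b₂] <;> decide

theorem matsumoto_pi1 :
    Nonempty (PresentedGroup rels ≃* Multiplicative (ℤ × ℤ)) := by
  refine ⟨MonoidHom.toMulEquiv toIntProd (zpowersPairHom commute_of_two_of_three) ?_ ?_⟩
  · refine PresentedGroup.ext fun i => ?_
    fin_cases i <;> simp [toIntProd, of_zero_eq, of_one_eq]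
  · exact MonoidHom.ext_mint_prod (by simp [toIntProd]) (by simp [toIntProd])

end Stmt0
end

section
/- The group with presentation ⟨b₁, b₂ ∣ b₁b₂² = 1, b₂b₁² = 1⟩ is isomorphic to the cyclic group ℤ/3ℤ. -/
/-!
Eliminating `b₁ = b₂⁻²` from the relations leaves `b₂³ = 1`, and then `b₁ = b₂⁻² = b₂`,
so the presented group is cyclic, generated by `b₂`, of order dividing `3`. Sending both
generators to `1 : ℤ/3ℤ` respects the relations, so the order of `b₂` is exactly `3`.
-/

namespace Stmt2

def b₁ : FreeGroup (Fin 2) := FreeGroup.of 0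
def b₂ : FreeGroup (Fin 2) := FreeGroup.of 1

def rels : Set (FreeGroup (Fin 2)) :=
  { b₁ * b₂ * b₂, b₂ * b₁ * b₁ }

theorem eq_and_pow_three_eq_one_of_mul_sq_eq_one {G : Type*} [Group G] {a b : G}
    (h₁ : a * b * b = 1) (h₂ : b * a * a = 1) : a = b ∧ b ^ 3 = 1 := by
  have ha : a = (b * b)⁻¹ := eq_inv_of_mul_eq_one_left (by rwa [← mul_assoc])
  have hb : b ^ 3 = 1 := by
    rw [ha] at h₂
    rw [← inv_eq_one, ← h₂]
    group
  refine ⟨?_, hb⟩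
  rw [ha, eq_comm, ← mul_eq_one_iff_eq_inv, ← hb, ← mul_assoc, pow_three', mul_assoc]

theorem of_zero_eq_of_one_and_pow_three_eq_one :
    (PresentedGroup.of 0 : PresentedGroup rels) = .of 1 ∧
      (PresentedGroup.of 1 : PresentedGroup rels) ^ 3 = 1 :=
  eq_and_pow_three_eq_one_of_mul_sq_eq_one (PresentedGroup.one_of_mem (Or.inl rfl))
    (PresentedGroup.one_of_mem (Or.inr rfl))

theorem mem_zpowers_of_one (x : PresentedGroup rels) : x ∈ Subgroup.zpowers (.of 1) := by
  have hrange : Set.range (PresentedGroup.of : Fin 2 → PresentedGroup rels) = {.of 1} := by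
    simp [Set.range_eq_singleton_iff, Fin.forall_fin_two, of_zero_eq_of_one_and_pow_three_eq_one.1]
  rw [Subgroup.zpowers_eq_closure, ← hrange, PresentedGroup.closure_range_of]
  exact Subgroup.mem_top x

def toZModThree : PresentedGroup rels →* Multiplicative (ZMod 3) :=
  PresentedGroup.toGroup (f := fun _ => .ofAdd 1) <| by
    rintro r (rfl | rfl) <;> simp [b₁, b₂] <;> decide

theorem orderOf_of_one : orderOf (PresentedGroup.of 1 : PresentedGroup rels) = 3 := by
  have hdvd := orderOf_map_dvd toZModThree (.of 1)
  rw [toZModThree, PresentedGroup.toGroup.of, orderOf_ofAdd_eq_addOrderOf,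
    ZMod.addOrderOf_one] at hdvd
  exact Nat.dvd_antisymm (orderOf_dvd_of_pow_eq_one of_zero_eq_of_one_and_pow_three_eq_one.2) hdvd

theorem reduced_presentation_Z3 :
    Nonempty (PresentedGroup rels ≃* Multiplicative (ZMod 3)) := by
  have hcard : Nat.card (PresentedGroup rels) = 3 := by
    rw [← orderOf_eq_card_of_forall_mem_zpowers mem_zpowers_of_one, orderOf_of_one]
  exact ⟨(zmodMulEquivOfGenerator mem_zpowers_of_one hcard).symm⟩

end Stmt2
end

section
/- For all integers m, k, l, the group with presentation on six generators a₁, b₁, a₂, b₂, c, d with relators a₁⁻¹[b₁⁻¹,d⁻¹], b₁⁻¹[a₁⁻¹,d], c⁻¹[b₂⁻¹,d⁻¹], d·[c⁻¹,b₂]^m, [a₁,c], [b₁,c], [a₂,c], [a₂,d], [a₁,b₁][a₂,b₂], [c,d], b₁b₂, and a₂⁻¹a₁^k b₁^l is the trivial group. -/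
/-!
For all integers m, k, l, the group presented on a₁, b₁, a₂, b₂, c, d with relators
a₁⁻¹[b₁⁻¹,d⁻¹], b₁⁻¹[a₁⁻¹,d], c⁻¹[b₂⁻¹,d⁻¹], d·[c⁻¹,b₂]^m, [a₁,c], [b₁,c], [a₂,c],
[a₂,d], [a₁,b₁][a₂,b₂], [c,d], b₁b₂, a₂⁻¹a₁^k b₁^l is the trivial group.
Generators: a₁ = 0, b₁ = 1, a₂ = 2, b₂ = 3, c = 4, d = 5.
Here [x,y] = x y x⁻¹ y⁻¹.
-/

namespace Stmt9

def a₁ : FreeGroup (Fin 6) := FreeGroup.of 0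
def b₁ : FreeGroup (Fin 6) := FreeGroup.of 1
def a₂ : FreeGroup (Fin 6) := FreeGroup.of 2
def b₂ : FreeGroup (Fin 6) := FreeGroup.of 3
def c : FreeGroup (Fin 6) := FreeGroup.of 4
def d : FreeGroup (Fin 6) := FreeGroup.of 5

/-- The commutator [x, y] = x y x⁻¹ y⁻¹. -/
def comm (x y : FreeGroup (Fin 6)) : FreeGroup (Fin 6) := x * y * x⁻¹ * y⁻¹

def rels (m k l : ℤ) : Set (FreeGroup (Fin 6)) :=
  { a₁⁻¹ * comm b₁⁻¹ d⁻¹,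
    b₁⁻¹ * comm a₁⁻¹ d,
    c⁻¹ * comm b₂⁻¹ d⁻¹,
    d * (comm c⁻¹ b₂) ^ m,
    comm a₁ c,
    comm b₁ c,
    comm a₂ c,
    comm a₂ d,
    comm a₁ b₁ * comm a₂ b₂,
    comm c d,
    b₁ * b₂,
    a₂⁻¹ * a₁ ^ k * b₁ ^ l }

set_option maxHeartbeats 1000000 in
theorem pi1_X_m_trivial (m k l : ℤ) :
    ∀ x : PresentedGroup (rels m k l), x = 1 := by
  set φ := PresentedGroup.mk (rels m k l) with hφ
  have hrel : ∀ r ∈ rels m k l, φ r = 1 := by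
    intro r hr
    exact (QuotientGroup.eq_one_iff r).mpr (Subgroup.subset_normalClosure hr)
  set A1 := φ a₁ with hA1
  set B1 := φ b₁ with hB1
  set A2 := φ a₂ with hA2
  set B2 := φ b₂ with hB2
  set C := φ c with hC
  set D := φ d with hD
  have h1 : A1⁻¹ * (B1⁻¹ * D⁻¹ * B1 * D) = 1 := by
    have h := hrel (a₁⁻¹ * comm b₁⁻¹ d⁻¹) (by simp [rels])
    simpa [comm, map_mul, map_inv] using h
  have h2 : B1⁻¹ * (A1⁻¹ * D * A1 * D⁻¹) = 1 := by
    have h := hrel (b₁⁻¹ * comm a₁⁻¹ d) (by simp [rels])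
    simpa [comm, map_mul, map_inv] using h
  have h3 : C⁻¹ * (B2⁻¹ * D⁻¹ * B2 * D) = 1 := by
    have h := hrel (c⁻¹ * comm b₂⁻¹ d⁻¹) (by simp [rels])
    simpa [comm, map_mul, map_inv] using h
  have h4 : D * (C⁻¹ * B2 * C * B2⁻¹) ^ m = 1 := by
    have h := hrel (d * (comm c⁻¹ b₂) ^ m) (by simp [rels])
    simpa [comm, map_mul, map_inv, map_zpow] using h
  have h6 : B1 * C * B1⁻¹ * C⁻¹ = 1 := by
    have h := hrel (comm b₁ c) (by simp [rels])
    simpa [comm, map_mul, map_inv] using h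
  have h11 : B1 * B2 = 1 := by
    have h := hrel (b₁ * b₂) (by simp [rels])
    simpa [map_mul] using h
  have h12 : A2⁻¹ * A1 ^ k * B1 ^ l = 1 := by
    have h := hrel (a₂⁻¹ * a₁ ^ k * b₁ ^ l) (by simp [rels])
    simpa [map_mul, map_inv, map_zpow] using h
  -- B2 = B1⁻¹
  have hB2eq : B2 = B1⁻¹ := by
    rw [eq_inv_iff_mul_eq_one]
    calc B2 * B1 = B1⁻¹ * (B1 * B2) * B1 := by group
    _ = 1 := by rw [h11]; group
  -- B1 commutes with C
  have hcom : B1 * C = C * B1 := by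
    calc B1 * C = (B1 * C * B1⁻¹ * C⁻¹) * C * B1 := by group
    _ = C * B1 := by rw [h6]; group
  have hinvcom : B1⁻¹ * C = C * B1⁻¹ := by
    calc B1⁻¹ * C = B1⁻¹ * C * B1 * B1⁻¹ := by group
    _ = B1⁻¹ * (C * B1) * B1⁻¹ := by group
    _ = B1⁻¹ * (B1 * C) * B1⁻¹ := by rw [hcom]
    _ = C * B1⁻¹ := by group
  -- [C⁻¹, B2] = 1
  have hCB2 : C⁻¹ * B2 * C * B2⁻¹ = 1 := by
    rw [hB2eq]
    calc C⁻¹ * B1⁻¹ * C * B1⁻¹⁻¹ = C⁻¹ * (B1⁻¹ * C) * B1 := by group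
    _ = C⁻¹ * (C * B1⁻¹) * B1 := by rw [hinvcom]
    _ = 1 := by group
  -- D = 1
  have hDone : D = 1 := by
    have := h4
    rw [hCB2, one_zpow, mul_one] at this
    exact this
  -- C = 1
  have hCone : C = 1 := by
    have := h3
    rw [hDone] at this
    calc C = (C⁻¹ * (B2⁻¹ * 1⁻¹ * B2 * 1))⁻¹ * (B2⁻¹ * B2) := by group
    _ = 1 := by rw [this]; group
  -- A1 = 1
  have hA1one : A1 = 1 := by
    have := h1
    rw [hDone] at this
    calc A1 = (A1⁻¹ * (B1⁻¹ * 1⁻¹ * B1 * 1))⁻¹ * (B1⁻¹ * B1) := by group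
    _ = 1 := by rw [this]; group
  -- B1 = 1
  have hB1one : B1 = 1 := by
    have := h2
    rw [hDone, hA1one] at this
    calc B1 = (B1⁻¹ * (1⁻¹ * 1 * 1 * 1⁻¹))⁻¹ := by group
    _ = 1 := by rw [this]; group
  have hB2one : B2 = 1 := by rw [hB2eq, hB1one]; group
  have hA2one : A2 = 1 := by
    have := h12
    rw [hA1one, hB1one, one_zpow, one_zpow, mul_one, mul_one] at this
    calc A2 = (A2⁻¹)⁻¹ := by group
    _ = 1 := by rw [this]; group
  -- every generator maps to 1
  intro x
  have : x ∈ (⊥ : Subgroup (PresentedGroup (rels m k l))) := by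
    refine PresentedGroup.generated_by _ ⊥ (fun j => ?_) x
    have hofs : ∀ i : Fin 6, (PresentedGroup.of i : PresentedGroup (rels m k l)) = φ (FreeGroup.of i) := fun i => rfl
    rw [Subgroup.mem_bot, hofs]
    fin_cases j
    · exact hA1one
    · exact hB1one
    · exact hA2one
    · exact hB2one
    · exact hCone
    · exact hDone
  exact Subgroup.mem_bot.mp this

end Stmt9
end
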